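/- Let T ∈ ℕ, and for each t = 1,…,T let X_t ∈ ℝ^{n_t×d} and y_t ∈ ℝ^{n_t}. Let Λ_1,…,Λ_T ∈ ℝ^{d×d} be symmetric matrices with 0 ≺ Λ_1 ⪯ ⋯ ⪯ Λ_T, and let θ_t = A_t^{-1} b_{t-1} be the MultiVAW iterates. Set ȳ = max_{t∈[T]} ‖y_t‖₂. Then for every θ ∈ ℝ^d, R_T(θ) ≤ θᵀΛ_Tθ + ȳ² · Σ_{t=1}^T tr( X_t A_t^{-1} X_tᵀ ). -/

import Mathlib

open Matrix Finset

noncomputable section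

/-!
Completing the square, `θ ↦ 2 bᵀθ - θᵀAθ` has maximum `bᵀA⁻¹b` for positive definite `A`,
attained at `θ = A⁻¹b`. With the potential `Φ t = b tᵀ (A t)⁻¹ b t`, this and
`A t ⪰ A (t-1) + X tᵀ X t` bound the loss of round `t` by
`Φ (t-1) - Φ t + (X tᵀ y t)ᵀ (A t)⁻¹ (X tᵀ y t) + ‖y t‖²`. Summing telescopes to `-Φ T`, which
by the same maximum is at most `θᵀ (Λ T) θ` plus the competitor's loss minus `∑ ‖y t‖²`.
Finally `vᵀ M v ≤ tr M · ‖v‖²` for positive semidefinite `M`, here `M = X t (A t)⁻¹ X tᵀ`.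
-/

namespace Matrix

variable {k m : Type*} [Fintype k] [Fintype m]

lemma dotProduct_mulVec_comm_of_isHermitian {M : Matrix k k ℝ} (hM : M.IsHermitian)
    (u v : k → ℝ) : u ⬝ᵥ M *ᵥ v = v ⬝ᵥ M *ᵥ u := by
  rw [dotProduct_mulVec, ← mulVec_transpose, ← conjTranspose_eq_transpose_of_trivial, hM,
    dotProduct_comm]

lemma dotProduct_mulVec_le_trace_mul {M : Matrix k k ℝ} (hM : M.PosSemidef) (x : k → ℝ) :
    x ⬝ᵥ M *ᵥ x ≤ M.trace * (x ⬝ᵥ x) := by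
  obtain ⟨r, v, rfl⟩ := posSemidef_iff_eq_sum_vecMulVec.mp hM
  simp only [star_trivial, sum_mulVec, vecMulVec_mulVec, op_smul_eq_smul, dotProduct_sum,
    dotProduct_smul, trace_sum, trace_vecMulVec, sum_mul, smul_eq_mul]
  refine sum_le_sum fun i _ => ?_
  rw [dotProduct_comm x, ← sq]
  simpa only [dotProduct, sq] using sum_mul_sq_le_sq_mul_sq univ (v i) x

lemma posSemidef_transpose_mul_self (X : Matrix m k ℝ) : (Xᵀ * X).PosSemidef := by
  simpa only [conjTranspose_eq_transpose_of_trivial] using posSemidef_conjTranspose_mul_self X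

lemma transpose_mulVec_dotProduct_le_trace_mul {N : Matrix k k ℝ} (hN : N.PosSemidef)
    (X : Matrix m k ℝ) (y : m → ℝ) :
    (Xᵀ *ᵥ y) ⬝ᵥ N *ᵥ (Xᵀ *ᵥ y) ≤ (X * N * Xᵀ).trace * (y ⬝ᵥ y) := by
  have hXNX : (X * N * Xᵀ).PosSemidef := by
    simpa only [conjTranspose_eq_transpose_of_trivial] using hN.mul_mul_conjTranspose_same X
  calc (Xᵀ *ᵥ y) ⬝ᵥ N *ᵥ (Xᵀ *ᵥ y) = y ⬝ᵥ (X * N * Xᵀ) *ᵥ y := by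
        rw [← mulVec_mulVec, ← mulVec_mulVec, dotProduct_mulVec y X, mulVec_transpose]
    _ ≤ _ := dotProduct_mulVec_le_trace_mul hXNX y

section Inverse

variable [DecidableEq k] {A : Matrix k k ℝ}

lemma mulVec_inv_mulVec (hA : IsUnit A.det) (b : k → ℝ) : A *ᵥ (A⁻¹ *ᵥ b) = b := by
  rw [mulVec_mulVec, mul_nonsing_inv _ hA, one_mulVec]

lemma two_mul_dotProduct_inv_mulVec_sub (hA : IsUnit A.det) (b : k → ℝ) :
    2 * (b ⬝ᵥ A⁻¹ *ᵥ b) - (A⁻¹ *ᵥ b) ⬝ᵥ A *ᵥ (A⁻¹ *ᵥ b) = b ⬝ᵥ A⁻¹ *ᵥ b := by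
  rw [mulVec_inv_mulVec hA, dotProduct_comm (A⁻¹ *ᵥ b)]
  ring

lemma PosDef.two_mul_dotProduct_sub_le (hA : A.PosDef) (b θ : k → ℝ) :
    2 * (b ⬝ᵥ θ) - θ ⬝ᵥ A *ᵥ θ ≤ b ⬝ᵥ A⁻¹ *ᵥ b := by
  set u := A⁻¹ *ᵥ b
  have hu : A *ᵥ u = b := mulVec_inv_mulVec hA.det_pos.ne'.isUnit b
  have hsq : 0 ≤ (θ - u) ⬝ᵥ A *ᵥ (θ - u) := by
    simpa only [star_trivial] using hA.posSemidef.dotProduct_mulVec_nonneg (θ - u)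
  have hcross : u ⬝ᵥ A *ᵥ θ = b ⬝ᵥ θ := by
    rw [dotProduct_mulVec_comm_of_isHermitian hA.isHermitian, hu, dotProduct_comm]
  rw [mulVec_sub, dotProduct_sub, sub_dotProduct, sub_dotProduct, hu, hcross] at hsq
  linarith [dotProduct_comm θ b, dotProduct_comm u b]

end Inverse

end Matrix

section SquareLoss

variable {k m : Type*} [Fintype k] [Fintype m]

def sqLoss (X : Matrix m k ℝ) (y : m → ℝ) (θ : k → ℝ) : ℝ :=
  ∑ i, (X *ᵥ θ - y) i ^ 2

lemma sqLoss_eq (X : Matrix m k ℝ) (y : m → ℝ) (θ : k → ℝ) :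
    sqLoss X y θ = θ ⬝ᵥ (Xᵀ * X) *ᵥ θ - 2 * ((Xᵀ *ᵥ y) ⬝ᵥ θ) + y ⬝ᵥ y := by
  rw [← mulVec_mulVec, dotProduct_mulVec, vecMul_transpose, mulVec_transpose,
    ← dotProduct_mulVec, sqLoss]
  simp only [dotProduct, Pi.sub_apply, mul_sum, ← sum_sub_distrib, ← sum_add_distrib]
  exact sum_congr rfl fun i _ => by ring

lemma dotProduct_mulVec_sub_eq_sum_sqLoss {ι : Type*} {m : ι → Type*} [∀ i, Fintype (m i)]
    (s : Finset ι) (Λ : Matrix k k ℝ) (X : (i : ι) → Matrix (m i) k ℝ) (y : (i : ι) → m i → ℝ)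
    (θ : k → ℝ) :
    θ ⬝ᵥ (Λ + ∑ i ∈ s, (X i)ᵀ * X i) *ᵥ θ - 2 * ((∑ i ∈ s, (X i)ᵀ *ᵥ y i) ⬝ᵥ θ)
      = θ ⬝ᵥ Λ *ᵥ θ + ∑ i ∈ s, (sqLoss (X i) (y i) θ - y i ⬝ᵥ y i) := by
  simp only [sqLoss_eq, add_sub_cancel_right, add_mulVec, sum_mulVec, dotProduct_add,
    dotProduct_sum, sum_dotProduct, mul_sum, sum_sub_distrib]
  ring

lemma sqLoss_le_of_posDef [DecidableEq k] {P D A : Matrix k k ℝ} (hP : P.PosDef)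
    (hD : D.PosSemidef) (X : Matrix m k ℝ) (y : m → ℝ) (b : k → ℝ)
    (hA : A = P + D + Xᵀ * X) :
    sqLoss X y (A⁻¹ *ᵥ b)
      ≤ b ⬝ᵥ P⁻¹ *ᵥ b - (b + Xᵀ *ᵥ y) ⬝ᵥ A⁻¹ *ᵥ (b + Xᵀ *ᵥ y)
        + (Xᵀ *ᵥ y) ⬝ᵥ A⁻¹ *ᵥ (Xᵀ *ᵥ y) + y ⬝ᵥ y := by
  have hApos : A.PosDef :=
    hA ▸ (hP.add_posSemidef hD).add_posSemidef (posSemidef_transpose_mul_self X)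
  set θ := A⁻¹ *ᵥ b
  set w := Xᵀ *ᵥ y
  have hopt := two_mul_dotProduct_inv_mulVec_sub hApos.det_pos.ne'.isUnit b
  have hprev := hP.two_mul_dotProduct_sub_le b θ
  have hsplit : θ ⬝ᵥ A *ᵥ θ = θ ⬝ᵥ P *ᵥ θ + θ ⬝ᵥ D *ᵥ θ + θ ⬝ᵥ (Xᵀ * X) *ᵥ θ := by
    rw [hA, add_mulVec, add_mulVec, dotProduct_add, dotProduct_add]
  have hD0 : 0 ≤ θ ⬝ᵥ D *ᵥ θ := by
    simpa only [star_trivial] using hD.dotProduct_mulVec_nonneg θ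
  have hexpand : (b + w) ⬝ᵥ A⁻¹ *ᵥ (b + w)
      = b ⬝ᵥ A⁻¹ *ᵥ b + 2 * (w ⬝ᵥ θ) + w ⬝ᵥ A⁻¹ *ᵥ w := by
    rw [mulVec_add, dotProduct_add, add_dotProduct, add_dotProduct,
      dotProduct_mulVec_comm_of_isHermitian hApos.inv.isHermitian b w]
    ring
  rw [sqLoss_eq]
  linarith

end SquareLoss

lemma Finset.sum_Icc_pred_sub {M : Type*} [AddCommGroup M] (f : ℕ → M) (n : ℕ) :
    ∑ t ∈ Icc 1 n, (f (t - 1) - f t) = f 0 - f n := by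
  induction n with
  | zero => simp
  | succ n ih => rw [sum_Icc_succ_top (by omega), ih, Nat.add_sub_cancel]; abel

lemma posDef_of_posSemidef_increments {n R : Type*} [Ring R] [PartialOrder R] [StarRing R]
    [AddLeftMono R] {Λ : ℕ → Matrix n n R} {T : ℕ} (hΛ1 : (Λ 1).PosDef)
    (hΛmono : ∀ t, 1 ≤ t → t + 1 ≤ T → (Λ (t + 1) - Λ t).PosSemidef) :
    ∀ t ∈ Icc 1 T, (Λ t).PosDef := by
  intro t ht
  obtain ⟨h1, hT⟩ := mem_Icc.mp ht
  clear ht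
  induction t, h1 using Nat.le_induction with
  | base => exact hΛ1
  | succ t ht ih =>
    simpa using (ih (by omega)).add_posSemidef (hΛmono t ht hT)

section MultiVAW

variable {k : Type*} [Fintype k] {m : ℕ → Type*} [∀ t, Fintype (m t)] {T : ℕ}
  {X : (t : ℕ) → Matrix (m t) k ℝ} {y : (t : ℕ) → m t → ℝ} {Λ A : ℕ → Matrix k k ℝ}
  {b : ℕ → k → ℝ}

lemma posDef_regularized_gram (hΛ1 : (Λ 1).PosDef)
    (hΛmono : ∀ t, 1 ≤ t → t + 1 ≤ T → (Λ (t + 1) - Λ t).PosSemidef)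
    (hA : ∀ t ∈ Icc 1 T, A t = Λ t + ∑ s ∈ Icc 1 t, (X s)ᵀ * X s) :
    ∀ t ∈ Icc 1 T, (A t).PosDef := fun t ht =>
  hA t ht ▸ (posDef_of_posSemidef_increments hΛ1 hΛmono t ht).add_posSemidef
    (posSemidef_sum _ fun s _ => posSemidef_transpose_mul_self (X s))

lemma sqLoss_iterate_le [DecidableEq k] (hΛ1 : (Λ 1).PosDef)
    (hΛmono : ∀ t, 1 ≤ t → t + 1 ≤ T → (Λ (t + 1) - Λ t).PosSemidef)
    (hA : ∀ t ∈ Icc 1 T, A t = Λ t + ∑ s ∈ Icc 1 t, (X s)ᵀ * X s)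
    (hb : ∀ t ≤ T, b t = ∑ s ∈ Icc 1 t, (X s)ᵀ *ᵥ y s) {t : ℕ} (ht : t ∈ Icc 1 T) :
    sqLoss (X t) (y t) ((A t)⁻¹ *ᵥ b (t - 1))
      ≤ b (t - 1) ⬝ᵥ (A (t - 1))⁻¹ *ᵥ b (t - 1) - b t ⬝ᵥ (A t)⁻¹ *ᵥ b t
        + ((X t)ᵀ *ᵥ y t) ⬝ᵥ (A t)⁻¹ *ᵥ ((X t)ᵀ *ᵥ y t) + y t ⬝ᵥ y t := by
  obtain ⟨u, rfl⟩ : ∃ u, t = u + 1 := ⟨t - 1, by grind⟩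
  have huT : u + 1 ≤ T := (mem_Icc.mp ht).2
  have hbu : b (u + 1) = b u + (X (u + 1))ᵀ *ᵥ y (u + 1) := by
    rw [hb _ huT, hb _ (by omega), sum_Icc_succ_top (by omega)]
  rw [Nat.add_sub_cancel, hbu]
  rcases Nat.eq_zero_or_pos u with rfl | hu
  · have hb0 : b 0 = 0 := by simp [hb 0 (Nat.zero_le T)]
    have hA1 : A 1 = Λ 1 + 0 + (X 1)ᵀ * X 1 := by simp [hA 1 ht]
    simpa [hb0] using sqLoss_le_of_posDef hΛ1 PosSemidef.zero (X 1) (y 1) (b 0) hA1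
  · have hAu : A (u + 1) = A u + (Λ (u + 1) - Λ u) + (X (u + 1))ᵀ * X (u + 1) := by
      rw [hA _ ht, hA u (mem_Icc.mpr ⟨hu, by omega⟩), sum_Icc_succ_top (by omega)]
      abel
    exact sqLoss_le_of_posDef (posDef_regularized_gram hΛ1 hΛmono hA u (mem_Icc.mpr ⟨hu, by omega⟩))
      (hΛmono u hu huT) _ _ _ hAu

lemma sum_sqLoss_iterate_le [DecidableEq k] (hΛ1 : (Λ 1).PosDef)
    (hΛmono : ∀ t, 1 ≤ t → t + 1 ≤ T → (Λ (t + 1) - Λ t).PosSemidef)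
    (hA : ∀ t ∈ Icc 1 T, A t = Λ t + ∑ s ∈ Icc 1 t, (X s)ᵀ * X s)
    (hb : ∀ t ≤ T, b t = ∑ s ∈ Icc 1 t, (X s)ᵀ *ᵥ y s) :
    ∑ t ∈ Icc 1 T, sqLoss (X t) (y t) ((A t)⁻¹ *ᵥ b (t - 1))
      ≤ -(b T ⬝ᵥ (A T)⁻¹ *ᵥ b T)
        + ∑ t ∈ Icc 1 T, (((X t)ᵀ *ᵥ y t) ⬝ᵥ (A t)⁻¹ *ᵥ ((X t)ᵀ *ᵥ y t) + y t ⬝ᵥ y t) := by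
  have hb0 : b 0 = 0 := by simp [hb 0 (Nat.zero_le T)]
  calc _ ≤ _ := sum_le_sum fun t ht => sqLoss_iterate_le hΛ1 hΛmono hA hb ht
    _ = _ := by
      simp only [add_assoc, sum_add_distrib, sum_Icc_pred_sub fun t => b t ⬝ᵥ (A t)⁻¹ *ᵥ b t, hb0,
        zero_dotProduct, zero_sub]

end MultiVAW

theorem multivaw_regret_trace_bound_general
    (T d : ℕ) (hT : 1 ≤ T)
    (n : ℕ → ℕ)
    (X : (t : ℕ) → Matrix (Fin (n t)) (Fin d) ℝ)
    (y : (t : ℕ) → Fin (n t) → ℝ)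
    (Λ : ℕ → Matrix (Fin d) (Fin d) ℝ)
    (hΛ1pos : (Λ 1).PosDef)
    (hΛmono : ∀ t, 1 ≤ t → t + 1 ≤ T → (Λ (t + 1) - Λ t).PosSemidef)
    (A : ℕ → Matrix (Fin d) (Fin d) ℝ)
    (hA : ∀ t ∈ Icc 1 T, A t = Λ t + ∑ s ∈ Icc 1 t, (X s)ᵀ * X s)
    (b : ℕ → (Fin d → ℝ))
    (hb : ∀ t ≤ T, b t = ∑ s ∈ Icc 1 t, (X s)ᵀ.mulVec (y s))
    (θ : ℕ → (Fin d → ℝ))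
    (hθ : ∀ t ∈ Icc 1 T, θ t = (A t)⁻¹.mulVec (b (t - 1)))
    (ybar : ℝ)
    (hybar : ybar = (Icc 1 T).sup' (Finset.nonempty_Icc.mpr hT)
      (fun t => Real.sqrt (∑ i, (y t i) ^ 2)))
    (θc : Fin d → ℝ) :
    (∑ t ∈ Icc 1 T, ∑ i, ((X t).mulVec (θ t) - y t) i ^ 2)
      - ∑ t ∈ Icc 1 T, ∑ i, ((X t).mulVec θc - y t) i ^ 2
    ≤ θc ⬝ᵥ (Λ T).mulVec θc
        + ybar ^ 2 * ∑ t ∈ Icc 1 T, ((X t) * (A t)⁻¹ * (X t)ᵀ).trace := by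
  have hyy : ∀ t ∈ Icc 1 T, y t ⬝ᵥ y t ≤ ybar ^ 2 := fun t ht => by
    have hle : √(∑ i, y t i ^ 2) ≤ ybar := hybar ▸ le_sup' (fun t => √(∑ i, y t i ^ 2)) ht
    simpa only [dotProduct, sq] using (Real.sqrt_le_iff.mp hle).2
  have hgain : ∀ t ∈ Icc 1 T, ((X t)ᵀ *ᵥ y t) ⬝ᵥ (A t)⁻¹ *ᵥ ((X t)ᵀ *ᵥ y t)
      ≤ ybar ^ 2 * ((X t) * (A t)⁻¹ * (X t)ᵀ).trace := fun t ht => by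
    have hpos := (posDef_regularized_gram hΛ1pos hΛmono hA t ht).inv.posSemidef
    calc _ ≤ ((X t) * (A t)⁻¹ * (X t)ᵀ).trace * (y t ⬝ᵥ y t) :=
          transpose_mulVec_dotProduct_le_trace_mul hpos (X t) (y t)
      _ ≤ _ := by
        rw [mul_comm]
        exact mul_le_mul_of_nonneg_right (hyy t ht)
          (hpos.mul_mul_conjTranspose_same _).trace_nonneg
  have hcomparator : -(b T ⬝ᵥ (A T)⁻¹ *ᵥ b T)
      ≤ θc ⬝ᵥ Λ T *ᵥ θc + ∑ t ∈ Icc 1 T, (sqLoss (X t) (y t) θc - y t ⬝ᵥ y t) := by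
    have hT' : T ∈ Icc 1 T := mem_Icc.mpr ⟨hT, le_rfl⟩
    rw [← dotProduct_mulVec_sub_eq_sum_sqLoss, ← hA T hT', ← hb T le_rfl]
    linarith [(posDef_regularized_gram hΛ1pos hΛmono hA T hT').two_mul_dotProduct_sub_le (b T) θc]
  have hlearner := sum_sqLoss_iterate_le hΛ1pos hΛmono hA hb
  rw [← sum_congr rfl fun t ht => congrArg (sqLoss (X t) (y t)) (hθ t ht)] at hlearner
  simp only [sum_add_distrib, sum_sub_distrib] at hcomparator hlearner
  change ∑ t ∈ Icc 1 T, sqLoss (X t) (y t) (θ t) - ∑ t ∈ Icc 1 T, sqLoss (X t) (y t) θc ≤ _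
  linarith [mul_sum (Icc 1 T) (fun t => ((X t) * (A t)⁻¹ * (X t)ᵀ).trace) (ybar ^ 2),
    sum_le_sum hgain]

/-- **Intermediate regret bound for MultiVAW.**  With symmetric regularizers
`0 ≺ Λ_1 ⪯ ⋯ ⪯ Λ_T`, `A_t = Λ_t + ∑_{s≤t} XₛᵀXₛ`, `b_t = ∑_{s≤t} Xₛᵀyₛ`,
iterates `θ_t = A_t⁻¹ b_{t-1}`, and `ȳ = max_{t∈[T]} ‖y t‖₂`, the regret
against any competitor `θc` is at most
`θcᵀ Λ_T θc + ȳ² ∑_{t=1}^T tr(X_t A_t⁻¹ X_tᵀ)`. -/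
theorem multivaw_regret_trace_bound
    (T d : ℕ) (hT : 1 ≤ T)
    (n : ℕ → ℕ)
    (X : (t : ℕ) → Matrix (Fin (n t)) (Fin d) ℝ)
    (y : (t : ℕ) → Fin (n t) → ℝ)
    (Λ : ℕ → Matrix (Fin d) (Fin d) ℝ)
    (hΛsymm : ∀ t ∈ Icc 1 T, (Λ t).IsHermitian)
    (hΛ1pos : (Λ 1).PosDef)
    (hΛmono : ∀ t, 1 ≤ t → t + 1 ≤ T → (Λ (t + 1) - Λ t).PosSemidef)
    (A : ℕ → Matrix (Fin d) (Fin d) ℝ)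
    (hA : ∀ t ∈ Icc 1 T, A t = Λ t + ∑ s ∈ Icc 1 t, (X s)ᵀ * X s)
    (b : ℕ → (Fin d → ℝ))
    (hb : ∀ t ≤ T, b t = ∑ s ∈ Icc 1 t, (X s)ᵀ.mulVec (y s))
    (θ : ℕ → (Fin d → ℝ))
    (hθ : ∀ t ∈ Icc 1 T, θ t = (A t)⁻¹.mulVec (b (t - 1)))
    (ybar : ℝ)
    (hybar : ybar = (Icc 1 T).sup' (Finset.nonempty_Icc.mpr hT)
      (fun t => Real.sqrt (∑ i, (y t i) ^ 2)))
    (θc : Fin d → ℝ) :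
    (∑ t ∈ Icc 1 T, ∑ i, ((X t).mulVec (θ t) - y t) i ^ 2)
      - ∑ t ∈ Icc 1 T, ∑ i, ((X t).mulVec θc - y t) i ^ 2
    ≤ θc ⬝ᵥ (Λ T).mulVec θc
        + ybar ^ 2 * ∑ t ∈ Icc 1 T, ((X t) * (A t)⁻¹ * (X t)ᵀ).trace :=
  multivaw_regret_trace_bound_general T d hT n X y Λ hΛ1pos hΛmono A hA b hb θ hθ ybar hybar θc
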